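/- Let n ≥ 3 and p ≥ 1, and let T be a tree with the following structure: a spine path v₁,…,vₙ with d(v₁) = d(vₙ) = p+1 and d(vᵢ) = p+2 for 2 ≤ i ≤ n−1; each spine vertex is adjacent to exactly p first-level pendant vertices, each of degree 2p; each first-level pendant vertex is adjacent to exactly 2p − 1 second-level pendant vertices, each of degree 2p²; each second-level pendant vertex is adjacent to exactly 2p² − 1 leaves of degree 1; and T has no other vertices or edges. Then σ(T) = n·p·(2p−1)·(2p²−1)³ + n·p·(2p−1)·(2p − 2p²)² + 2p·(1−p)² + p(n−2)·(2−p)² + 2. -/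

import Mathlib

open Finset

variable {V : Type*}

noncomputable def sigmaIndex [Fintype V] (G : SimpleGraph V) : ℤ := by
  classical
  exact ∑ e ∈ G.edgeFinset,
    Sym2.lift ⟨fun u v => ((G.degree u : ℤ) - (G.degree v : ℤ)) ^ 2, fun u v => by ring⟩ e

noncomputable def deg [Fintype V] (G : SimpleGraph V) (v : V) : ℕ := by
  classical
  exact G.degree v

noncomputable def nbrCount [Fintype V] (G : SimpleGraph V) (v : V) (P : V → Prop) : ℕ := by
  classical
  exact ((G.neighborFinset v).filter P).card

def IsCaterpillar [Fintype V] (G : SimpleGraph V) : Prop :=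
  ∃ (u w : V) (P : G.Walk u w), P.IsPath ∧
    ∀ x : V, x ∈ P.support ∨ ∃ y ∈ P.support, G.Adj x y

/-!
Counting every edge from both ends, `2σ(T)` is a sum over ordered adjacent pairs. Since edges
join consecutive spine vertices or a vertex to one of its children on the next level, this sum
is the spine part plus twice the sum over parent–child pairs. On the spine only the two end
edges join vertices of different degrees, contributing `1` each. Below the spine the degree
difference along an edge depends only on the levels, so each level contributes
(number of vertices) × (children per vertex) × (difference)², and the level sizes are
`n`, `np` and `np(2p − 1)` because every non-spine vertex has exactly one parent: its degree
exceeds its number of children by one.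
-/

theorem sum_filter_eq_sum_fin {M : Type*} [AddCommMonoid M] [Fintype V] {n : ℕ}
    {P : V → Prop} [DecidablePred P] {v : Fin n → V} (hinj : Function.Injective v)
    (hv : ∀ w, P w ↔ ∃ i, w = v i) (g : V → M) :
    ∑ w with P w, g w = ∑ i, g (v i) := by
  rw [show ({w | P w} : Finset V) = univ.map ⟨v, hinj⟩ by ext; simp [hv, eq_comm], sum_map]
  rfl

namespace SimpleGraph

variable [Fintype V] (G : SimpleGraph V) [DecidableRel G.Adj]
variable {M : Type*} [AddCommMonoid M]

theorem two_nsmul_sum_edgeFinset (f : Sym2 V → M) :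
    2 • ∑ e ∈ G.edgeFinset, f e = ∑ w, ∑ x ∈ G.neighborFinset w, f s(w, x) := by
  classical
  calc 2 • ∑ e ∈ G.edgeFinset, f e = ∑ e ∈ G.edgeFinset, ∑ d : G.Dart with d.edge = e, f e := by
        rw [smul_sum]
        refine sum_congr rfl fun e he => ?_
        rw [sum_const, G.dart_edge_fiber_card e (mem_edgeFinset.1 he)]
    _ = ∑ d : G.Dart, f d.edge := sum_fiberwise_of_maps_to' (fun d _ => by simp) f
    _ = ∑ p ∈ univ.filter (fun p : V × V => G.Adj p.1 p.2), f s(p.1, p.2) :=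
        sum_bij' (fun d _ => d.toProd) (fun p hp => ⟨p, (mem_filter.1 hp).2⟩)
          (fun d _ => by simp) (fun _ _ => mem_univ _) (fun _ _ => rfl) (fun _ _ => rfl)
          (fun _ _ => rfl)
    _ = _ := sum_finset_product' _ univ (fun w => G.neighborFinset w)
          (f := fun w x => f s(w, x)) (by simp)

variable (ℓ : V → ℕ)

theorem sum_neighborFinset_eq_same_level_add_two_nsmul (F : V → V → M)
    (hF : ∀ w x, F w x = F x w)
    (hℓ : ∀ w x, G.Adj w x → ℓ x = ℓ w ∨ ℓ x = ℓ w + 1 ∨ ℓ w = ℓ x + 1) :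
    ∑ w, ∑ x ∈ G.neighborFinset w, F w x =
      ∑ w, ∑ x ∈ G.neighborFinset w with ℓ x = ℓ w, F w x +
        2 • ∑ w, ∑ x ∈ G.neighborFinset w with ℓ x = ℓ w + 1, F w x := by
  have hsplit : ∀ w, ∑ x ∈ G.neighborFinset w, F w x =
      ∑ x ∈ G.neighborFinset w with ℓ x = ℓ w, F w x +
        ∑ x ∈ G.neighborFinset w with ℓ x = ℓ w + 1, F w x +
        ∑ x ∈ G.neighborFinset w with ℓ w = ℓ x + 1, F w x := by
    intro w
    simp only [sum_filter, ← sum_add_distrib]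
    refine sum_congr rfl fun x hx => ?_
    have := hℓ w x ((G.mem_neighborFinset w x).1 hx)
    split_ifs <;> first | (exfalso; omega) | simp
  have hdown : ∑ w, ∑ x ∈ G.neighborFinset w with ℓ w = ℓ x + 1, F w x =
      ∑ w, ∑ x ∈ G.neighborFinset w with ℓ x = ℓ w + 1, F w x := by
    rw [sum_comm' (t' := univ) (s' := fun x => {w ∈ G.neighborFinset x | ℓ w = ℓ x + 1})
      (by simp [adj_comm])]
    simp only [hF]
  simp only [hsplit, sum_add_distrib, hdown, two_nsmul, add_assoc]

theorem sum_level_succ_eq_sum_range {m : ℕ} (hℓ : ∀ w, ℓ w ≤ m) (F : V → V → M) :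
    ∑ w, ∑ x ∈ G.neighborFinset w with ℓ x = ℓ w + 1, F w x =
      ∑ a ∈ range m, ∑ w with ℓ w = a, ∑ x ∈ G.neighborFinset w with ℓ x = a + 1, F w x := by
  rw [← sum_fiberwise_of_maps_to (g := ℓ) (t := range (m + 1))
    fun w _ => mem_range.2 (Nat.lt_succ_of_le (hℓ w)), sum_range_succ]
  have htop : ∑ w with ℓ w = m, ∑ x ∈ G.neighborFinset w with ℓ x = ℓ w + 1, F w x = 0 :=
    sum_eq_zero fun w hw => sum_eq_zero fun x hx => by
      have := hℓ x
      simp only [mem_filter] at hw hx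
      omega
  rw [htop, add_zero]
  exact sum_congr rfl fun a _ => sum_congr rfl fun w hw => by rw [(mem_filter.1 hw).2]

theorem card_filter_add_card_filter_neighborFinset {x : V} {a b : ℕ} (hab : a ≠ b)
    (h : ∀ y ∈ G.neighborFinset x, ℓ y = a ∨ ℓ y = b) :
    #{y ∈ G.neighborFinset x | ℓ y = a} + #{y ∈ G.neighborFinset x | ℓ y = b} =
      G.degree x := by
  rw [← card_neighborFinset_eq_degree,
    ← card_filter_add_card_filter_not (s := G.neighborFinset x) (ℓ · = a)]
  congr 2
  refine filter_congr fun y hy => ?_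
  rcases h y hy with h | h <;> simp [h, hab, hab.symm]

theorem card_level_succ {a c : ℕ}
    (hchild : ∀ w, ℓ w = a → #{x ∈ G.neighborFinset w | ℓ x = a + 1} = c)
    (hparent : ∀ x, ℓ x = a + 1 → #{w ∈ G.neighborFinset x | ℓ w = a} = 1) :
    #{x | ℓ x = a + 1} = #{w | ℓ w = a} * c := by
  have hnbr : ∀ w b, ({x | ℓ x = b} : Finset V).filter (G.Adj w) =
      {x ∈ G.neighborFinset w | ℓ x = b} := fun w b => by
    ext x
    simp [and_comm]
  have := card_mul_eq_card_mul G.Adj (s := {w | ℓ w = a}) (t := {x | ℓ x = a + 1})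
    (m := c) (n := 1) (fun w hw => by rw [bipartiteAbove, hnbr, hchild w (mem_filter.1 hw).2])
    (fun x hx => by
      rw [bipartiteBelow, filter_congr fun w _ => G.adj_comm w x, hnbr,
        hparent x (mem_filter.1 hx).2])
  simpa using this.symm

theorem card_level_succ_of_degree
    (hℓ : ∀ w x, G.Adj w x → (ℓ w = 0 ∧ ℓ x = 0) ∨ ℓ x = ℓ w + 1 ∨ ℓ w = ℓ x + 1) {a c : ℕ}
    (hchild : ∀ w, ℓ w = a → #{x ∈ G.neighborFinset w | ℓ x = a + 1} = c)
    (hdeg : ∀ x, ℓ x = a + 1 → #{y ∈ G.neighborFinset x | ℓ y = a + 2} + 1 = G.degree x) :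
    #{x | ℓ x = a + 1} = #{w | ℓ w = a} * c := by
  refine G.card_level_succ ℓ hchild fun x hx => ?_
  have := G.card_filter_add_card_filter_neighborFinset ℓ (x := x) (a := a) (b := a + 2)
    (by omega) fun y hy => by have := hℓ x y ((G.mem_neighborFinset x y).1 hy); omega
  have := hdeg x hx
  omega

theorem sum_children_eq_of_degree {a c dw dx : ℕ} (f : ℕ → ℕ → M)
    (hchild : ∀ w, ℓ w = a → #{x ∈ G.neighborFinset w | ℓ x = a + 1} = c)
    (hdw : ∀ w, ℓ w = a → G.degree w = dw) (hdx : ∀ x, ℓ x = a + 1 → G.degree x = dx) :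
    ∑ w with ℓ w = a, ∑ x ∈ G.neighborFinset w with ℓ x = a + 1, f (G.degree w) (G.degree x) =
      #{w | ℓ w = a} • c • f dw dx :=
  sum_eq_card_nsmul fun w hw => by
    rw [sum_eq_card_nsmul fun x hx => by rw [hdw w (mem_filter.1 hw).2, hdx x (mem_filter.1 hx).2],
      hchild w (mem_filter.1 hw).2]

end SimpleGraph

open SimpleGraph

def spineDegree (n p i : ℕ) : ℕ := if i = 0 ∨ i = n - 1 then p + 1 else p + 2

theorem eq_spineDegree {n p : ℕ} (hn : 1 ≤ n) {d : Fin n → ℕ}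
    (hend : d ⟨0, by omega⟩ = p + 1 ∧ d ⟨n - 1, by omega⟩ = p + 1)
    (hint : ∀ i : Fin n, 0 < (i : ℕ) → (i : ℕ) < n - 1 → d i = p + 2) (i : Fin n) :
    d i = spineDegree n p i := by
  unfold spineDegree
  split_ifs with h
  · rcases h with h | h
    · rw [show i = ⟨0, by omega⟩ from Fin.ext h, hend.1]
    · rw [show i = ⟨n - 1, by omega⟩ from Fin.ext h, hend.2]
  · exact hint i (by omega) (by omega)

theorem sum_fin_spineDegree {M : Type*} [AddCommMonoid M] {n : ℕ} (hn : 2 ≤ n) (p : ℕ)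
    (f : ℕ → M) :
    ∑ i : Fin n, f (spineDegree n p i) = 2 • f (p + 1) + (n - 2) • f (p + 2) := by
  obtain ⟨m, rfl⟩ := Nat.exists_eq_add_of_le' hn
  have hmid : ∀ i ∈ range m, f (spineDegree (m + 2) p (i + 1)) = f (p + 2) := fun i hi => by
    rw [spineDegree, if_neg (by simp at hi; omega)]
  rw [Fin.sum_univ_eq_sum_range (fun i => f (spineDegree (m + 2) p i)), sum_range_succ,
    sum_range_succ', sum_congr rfl hmid, sum_const, card_range]
  simp [spineDegree, two_nsmul]
  abel

theorem sum_sum_fin_ite_val_eq {n a b : ℕ} (ha : a < n) (hb : b < n) :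
    ∑ i : Fin n, ∑ j : Fin n, (if (i : ℕ) = a ∧ (j : ℕ) = b then (1 : ℤ) else 0) = 1 := by
  rw [sum_eq_single ⟨a, ha⟩, sum_eq_single ⟨b, hb⟩] <;> simp_all [Fin.ext_iff]

theorem sum_sum_sq_sub_spineDegree {n : ℕ} (hn : 3 ≤ n) (p : ℕ) :
    ∑ i : Fin n, ∑ j : Fin n, (if (i : ℕ) + 1 = j ∨ (j : ℕ) + 1 = i then
      ((spineDegree n p i : ℤ) - spineDegree n p j) ^ 2 else 0) = 4 := by
  -- only the end edges `{0, 1}` and `{n - 2, n - 1}` join vertices of different degrees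
  have hpoint : ∀ i j : Fin n,
      (if (i : ℕ) + 1 = j ∨ (j : ℕ) + 1 = i then
        ((spineDegree n p i : ℤ) - spineDegree n p j) ^ 2 else 0) =
        (if (i : ℕ) = 0 ∧ (j : ℕ) = 1 then 1 else 0) +
        (if (i : ℕ) = 1 ∧ (j : ℕ) = 0 then 1 else 0) +
        (if (i : ℕ) = n - 2 ∧ (j : ℕ) = n - 1 then 1 else 0) +
        (if (i : ℕ) = n - 1 ∧ (j : ℕ) = n - 2 then 1 else 0) := by
    intro i j
    have := i.isLt
    have := j.isLt
    unfold spineDegree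
    split_ifs <;> first | omega | (push_cast; ring)
  simp only [hpoint, sum_add_distrib]
  rw [sum_sum_fin_ite_val_eq, sum_sum_fin_ite_val_eq, sum_sum_fin_ite_val_eq,
    sum_sum_fin_ite_val_eq] <;> omega

section

variable [Fintype V] (G : SimpleGraph V) [DecidableRel G.Adj]

theorem deg_eq_degree (w : V) : deg G w = G.degree w := by
  unfold deg
  congr!

theorem nbrCount_eq_card_filter (w : V) (P : V → Prop) [DecidablePred P] :
    nbrCount G w P = #{x ∈ G.neighborFinset w | P x} := by
  unfold nbrCount
  congr!

theorem two_mul_sigmaIndex :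
    2 * sigmaIndex G = ∑ w, ∑ x ∈ G.neighborFinset w, ((G.degree w : ℤ) - G.degree x) ^ 2 := by
  rw [← Nat.cast_ofNat, ← nsmul_eq_mul, sigmaIndex]
  convert G.two_nsmul_sum_edgeFinset
    (Sym2.lift ⟨fun u v => ((G.degree u : ℤ) - G.degree v) ^ 2, fun u v => by ring⟩)
    using 3 <;> congr!

variable {G} {n p : ℕ} {v : Fin n → V} {level : V → ℕ}

theorem sum_same_level_eq_four (hn : 3 ≤ n) (hinj : Function.Injective v)
    (hlevel0 : ∀ w : V, level w = 0 ↔ ∃ i, w = v i)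
    (hspine : ∀ i j : Fin n, G.Adj (v i) (v j) ↔ ((i : ℕ) + 1 = (j : ℕ) ∨ (j : ℕ) + 1 = (i : ℕ)))
    (hconsec : ∀ w x : V, G.Adj w x →
      (level w = 0 ∧ level x = 0) ∨ level x = level w + 1 ∨ level w = level x + 1)
    (hD : ∀ i, G.degree (v i) = spineDegree n p i) :
    ∑ w, ∑ x ∈ G.neighborFinset w with level x = level w,
      ((G.degree w : ℤ) - G.degree x) ^ 2 = 4 := by
  calc _ = ∑ w with level w = 0, ∑ x with level x = 0,
        if G.Adj w x then ((G.degree w : ℤ) - G.degree x) ^ 2 else 0 := by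
        rw [sum_filter]
        refine sum_congr rfl fun w _ => ?_
        split_ifs with hw
        · rw [← sum_filter, hw, neighborFinset_eq_filter, filter_filter, filter_filter]
          simp only [and_comm]
        · refine sum_eq_zero fun x hx => ?_
          simp only [mem_filter, mem_neighborFinset] at hx
          have := hconsec w x hx.1
          omega
    _ = 4 := by
        simp only [sum_filter_eq_sum_fin hinj hlevel0, hspine, hD]
        exact sum_sum_sq_sub_spineDegree hn p

theorem sum_spine_children_eq (hn : 2 ≤ n) (hinj : Function.Injective v)
    (hlevel0 : ∀ w : V, level w = 0 ↔ ∃ i, w = v i)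
    (hD : ∀ i, G.degree (v i) = spineDegree n p i)
    (hchild0 : ∀ i : Fin n, #{x ∈ G.neighborFinset (v i) | level x = 1} = p)
    (hdeg1 : ∀ w : V, level w = 1 → G.degree w = 2 * p) :
    ∑ w with level w = 0, ∑ x ∈ G.neighborFinset w with level x = 1,
      ((G.degree w : ℤ) - G.degree x) ^ 2 =
      2 • p • (((p + 1 : ℕ) : ℤ) - (2 * p : ℕ)) ^ 2 +
        (n - 2) • p • (((p + 2 : ℕ) : ℤ) - (2 * p : ℕ)) ^ 2 := by
  rw [sum_filter_eq_sum_fin hinj hlevel0,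
    ← sum_fin_spineDegree hn p fun k => p • ((k : ℤ) - (2 * p : ℕ)) ^ 2]
  refine sum_congr rfl fun i _ => ?_
  rw [sum_eq_card_nsmul fun x hx => by rw [hD i, hdeg1 x (mem_filter.1 hx).2], hchild0 i]

end

/-- sigma index of the three-level tree where first-level pendants have
degree `2p` (hence `2p − 1` children each) and second-level pendants have degree `2p²`
(hence `2p² − 1` leaf children each). -/
theorem sigma_three_level_tree_2p {V : Type*} [Fintype V] (G : SimpleGraph V)
    (n p : ℕ) (v : Fin n → V) (level : V → ℕ)
    (hn : 3 ≤ n) (hp : 1 ≤ p)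
    (hinj : Function.Injective v)
    (hlevel0 : ∀ w : V, level w = 0 ↔ ∃ i, w = v i)
    (hlevelle : ∀ w : V, level w ≤ 3)
    (hspine : ∀ i j : Fin n, G.Adj (v i) (v j) ↔ ((i : ℕ) + 1 = (j : ℕ) ∨ (j : ℕ) + 1 = (i : ℕ)))
    (hconsec : ∀ w x : V, G.Adj w x →
      (level w = 0 ∧ level x = 0) ∨ level x = level w + 1 ∨ level w = level x + 1)
    (hdegEnd : deg G (v ⟨0, by omega⟩) = p + 1 ∧ deg G (v ⟨n - 1, by omega⟩) = p + 1)
    (hdegInt : ∀ i : Fin n, 0 < (i : ℕ) → (i : ℕ) < n - 1 → deg G (v i) = p + 2)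
    (hchild0 : ∀ i : Fin n, nbrCount G (v i) (fun w => level w = 1) = p)
    (hdeg1 : ∀ w : V, level w = 1 → deg G w = 2 * p)
    (hchild1 : ∀ w : V, level w = 1 → nbrCount G w (fun x => level x = 2) = 2 * p - 1)
    (hdeg2 : ∀ w : V, level w = 2 → deg G w = 2 * p ^ 2)
    (hchild2 : ∀ w : V, level w = 2 → nbrCount G w (fun x => level x = 3) = 2 * p ^ 2 - 1)
    (hdeg3 : ∀ w : V, level w = 3 → deg G w = 1) :
    sigmaIndex G =
      (n : ℤ) * (p : ℤ) * (2 * (p : ℤ) - 1) * (2 * (p : ℤ) ^ 2 - 1) ^ 3 +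
      (n : ℤ) * (p : ℤ) * (2 * (p : ℤ) - 1) * (2 * (p : ℤ) - 2 * (p : ℤ) ^ 2) ^ 2 +
      2 * (p : ℤ) * (1 - (p : ℤ)) ^ 2 +
      (p : ℤ) * ((n : ℤ) - 2) * (2 - (p : ℤ)) ^ 2 + 2 := by
  classical
  simp only [deg_eq_degree, nbrCount_eq_card_filter] at *
  have hD := eq_spineDegree (by omega) hdegEnd hdegInt
  have hp2 : 1 ≤ p ^ 2 := Nat.one_le_pow _ _ hp
  have hcard0 : #{w | level w = 0} = n := by
    simpa using sum_filter_eq_sum_fin hinj hlevel0 fun _ => (1 : ℕ)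
  have hcard1 : #{x | level x = 1} = n * p := by
    rw [G.card_level_succ_of_degree level hconsec (a := 0)
      (fun w hw => by obtain ⟨i, rfl⟩ := (hlevel0 w).1 hw; exact hchild0 i)
      (fun x hx => by rw [hchild1 x hx, hdeg1 x hx]; omega), hcard0]
  have hcard2 : #{x | level x = 2} = n * p * (2 * p - 1) := by
    rw [G.card_level_succ_of_degree level hconsec (a := 1) hchild1
      (fun x hx => by rw [hchild2 x hx, hdeg2 x hx]; omega), hcard1]
  have h2σ := two_mul_sigmaIndex G
  rw [G.sum_neighborFinset_eq_same_level_add_two_nsmul level _ (fun _ _ => by ring)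
      (fun w x h => by have := hconsec w x h; omega),
    sum_same_level_eq_four hn hinj hlevel0 hspine hconsec hD,
    G.sum_level_succ_eq_sum_range level hlevelle] at h2σ
  simp only [sum_range_succ, sum_range_zero, zero_add] at h2σ
  rw [sum_spine_children_eq (by omega) hinj hlevel0 hD hchild0 hdeg1,
    G.sum_children_eq_of_degree level (a := 1) (fun a b => ((a : ℤ) - b) ^ 2) hchild1 hdeg1 hdeg2,
    G.sum_children_eq_of_degree level (a := 2) (fun a b => ((a : ℤ) - b) ^ 2) hchild2 hdeg2 hdeg3,
    hcard1, hcard2] at h2σ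
  push_cast [nsmul_eq_mul, Nat.cast_sub (by omega : 2 ≤ n), Nat.cast_sub (by omega : 1 ≤ 2 * p),
    Nat.cast_sub (by omega : 1 ≤ 2 * p ^ 2)] at h2σ
  exact mul_left_cancel₀ two_ne_zero (h2σ.trans (by ring))
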